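/- arXiv:1610.06746 — 5 statements merged into one kernel-verified Lean document; each statement's English description precedes it below -/
import Mathlib

section
/- Let A be a symmetric m×m matrix over a linearly ordered field with nonnegative diagonal entries such that A_ii * A_jj ≥ (m-1)² * A_ij² for all pairs i ≠ j. Then A is positive semidefinite. -/
/-!
Write `c = m - 1`. The hypothesis says that every `2 × 2` form `A i i s² + 2 c A i j s t + A j j t²`
with `i ≠ j` is positive semidefinite. Summing these forms at `(s, t) = (x i, x j)` over all ordered
pairs `i ≠ j` counts each diagonal term `A i i (x i)²` exactly `2 (m - 1) = 2c` times and each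
off-diagonal term `A i j x i x j` with weight `2c`, so the sum equals `2c · xᵀ A x`.
When `m ≤ 1` the form is just `A 0 0 (x 0)²`.
-/

open Matrix Finset

theorem quadratic_nonneg_of_sq_le_mul {K : Type*} [CommRing K] [LinearOrder K]
    [IsStrictOrderedRing K] {a b d : K} (ha : 0 ≤ a) (hd : 0 ≤ d) (hb : b ^ 2 ≤ a * d) (x y : K) :
    0 ≤ a * x ^ 2 + 2 * b * (x * y) + d * y ^ 2 := by
  rcases ha.eq_or_lt with rfl | ha
  · obtain rfl : b = 0 :=
      pow_eq_zero_iff two_ne_zero |>.mp (le_antisymm (by simpa using hb) (sq_nonneg b))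
    simp only [zero_mul, mul_zero, zero_add]
    positivity
  · refine nonneg_of_mul_nonneg_right ?_ ha
    have hdet := sub_nonneg.mpr hb
    calc 0 ≤ (a * x + b * y) ^ 2 + (a * d - b ^ 2) * y ^ 2 := by positivity
      _ = a * (a * x ^ 2 + 2 * b * (x * y) + d * y ^ 2) := by ring

section

variable {ι : Type*} [Fintype ι]

theorem Finset.sum_sum_erase_eq_sub [DecidableEq ι] {R : Type*} [AddCommGroup R]
    (f : ι → ι → R) : ∑ i, ∑ j ∈ univ.erase i, f i j = ∑ i, ∑ j, f i j - ∑ i, f i i := by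
  simp only [sum_erase_eq_sub (mem_univ _), sum_sub_distrib]

theorem sum_two_by_two_forms_eq [DecidableEq ι] {R : Type*} [CommRing R] (A : Matrix ι ι R)
    (x : ι → R) :
    ∑ i, ∑ j ∈ univ.erase i,
      (A i i * x i ^ 2 + 2 * ((Fintype.card ι : R) - 1) * A i j * (x i * x j) + A j j * x j ^ 2) =
      2 * ((Fintype.card ι : R) - 1) * (x ⬝ᵥ A *ᵥ x) := by
  set c : R := (Fintype.card ι : R) - 1
  have hcross : ∀ i j, 2 * c * A i j * (x i * x j) = 2 * c * (x i * (A i j * x j)) :=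
    fun _ _ => by ring
  have hdiag : ∀ i, 2 * c * (x i * (A i i * x i)) = 2 * c * (A i i * x i ^ 2) :=
    fun _ => by ring
  rw [Finset.sum_sum_erase_eq_sub]
  simp only [hcross, hdiag, sum_add_distrib, sum_const, card_univ, nsmul_eq_mul]
  simp only [← mul_sum, dotProduct, mulVec]
  ring

section Nonneg

variable {K : Type*} [CommRing K] [LinearOrder K] [IsStrictOrderedRing K]

theorem dotProduct_mulVec_self_nonneg_of_subsingleton [Subsingleton ι] (A : Matrix ι ι K)
    (hdiag : ∀ i, 0 ≤ A i i) (x : ι → K) : 0 ≤ x ⬝ᵥ (A *ᵥ x) :=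
  sum_nonneg fun i _ => by
    rw [mulVec, dotProduct, Fintype.sum_subsingleton _ i]
    nlinarith [mul_nonneg (hdiag i) (mul_self_nonneg (x i))]

theorem dotProduct_mulVec_self_nonneg_of_sq_le_mul (A : Matrix ι ι K) (hdiag : ∀ i, 0 ≤ A i i)
    (hminor : ∀ i j, i ≠ j → ((Fintype.card ι : K) - 1) ^ 2 * A i j ^ 2 ≤ A i i * A j j)
    (x : ι → K) : 0 ≤ x ⬝ᵥ (A *ᵥ x) := by
  classical
  rcases le_or_gt (Fintype.card ι) 1 with hcard | hcard
  · have := Fintype.card_le_one_iff_subsingleton.mp hcard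
    exact dotProduct_mulVec_self_nonneg_of_subsingleton A hdiag x
  have hc : (0 : K) < 2 * ((Fintype.card ι : K) - 1) := by
    have : (1 : K) < Fintype.card ι := by exact_mod_cast hcard
    linarith
  refine nonneg_of_mul_nonneg_right ?_ hc
  rw [← sum_two_by_two_forms_eq]
  refine sum_nonneg fun i _ => sum_nonneg fun j hj => ?_
  have hpair := quadratic_nonneg_of_sq_le_mul (hdiag i) (hdiag j)
    (by rw [mul_pow]; exact hminor i j (ne_of_mem_erase hj).symm) (x i) (x j)
  linarith

end Nonneg

end

theorem psd_of_dominant_two_by_two_minors_general {K : Type*} [Field K] [LinearOrder K] [IsStrictOrderedRing K] {m : ℕ}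
    (A : Matrix (Fin m) (Fin m) K)
    (hdiag : ∀ i, 0 ≤ A i i)
    (hminor : ∀ i j, i ≠ j → ((m : K) - 1) ^ 2 * (A i j) ^ 2 ≤ A i i * A j j) :
    ∀ x : Fin m → K, 0 ≤ x ⬝ᵥ (A *ᵥ x) :=
  dotProduct_mulVec_self_nonneg_of_sq_le_mul A hdiag (by simpa only [Fintype.card_fin] using hminor)

/-- Let `A` be a symmetric `m × m` matrix over a linearly ordered
field with nonnegative diagonal entries such that `A i i * A j j ≥ (m-1)^2 * (A i j)^2`
for all `i ≠ j`.  Then `A` is positive semidefinite, i.e. `xᵀ A x ≥ 0` for all `x`. -/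
theorem psd_of_dominant_two_by_two_minors {K : Type*} [Field K] [LinearOrder K] [IsStrictOrderedRing K] {m : ℕ}
    (A : Matrix (Fin m) (Fin m) K) (hsym : A.IsSymm)
    (hdiag : ∀ i, 0 ≤ A i i)
    (hminor : ∀ i j, i ≠ j → ((m : K) - 1) ^ 2 * (A i j) ^ 2 ≤ A i i * A j j) :
    ∀ x : Fin m → K, 0 ≤ x ⬝ᵥ (A *ᵥ x) :=
  psd_of_dominant_two_by_two_minors_general A hdiag hminor
end

section
/- Let a⁽¹⁾, …, a⁽ᵖ⁾ be vectors in Kⁿ and b ∈ Kᵖ, where K is an ordered field. Suppose that for every sign pattern δ ∈ {+1,−1}ᵖ there exists a point x^δ ∈ Kⁿ such that δ_s(⟨a⁽ˢ⁾, x^δ⟩ − b_s) ≥ 0 for all s ∈ [p]. Then there exists a point y in the convex hull of the points {x^δ} such that ⟨a⁽ˢ⁾, y⟩ = b_s for all s. -/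
/-!
Induction on `p`. For each sign pattern `δ` of the first `p` constraints, the two points
`X (δ, +)` and `X (δ, -)` lie on opposite closed sides of the last hyperplane, so some point of
the segment between them lies on it. These points satisfy the sign conditions of the first `p`
constraints again, because each closed half-line is convex, and they lie in the convex hull of
the original points, so the induction hypothesis applies to them.
-/

open Set

section SignPatterns

variable {K E : Type*} [Field K] [LinearOrder K] [IsStrictOrderedRing K]
  [AddCommGroup E] [Module K E]

variable (K) in
def signHalfLine (σ : Bool) : Set K :=
  if σ then Ici 0 else Iic 0

theorem convex_signHalfLine (σ : Bool) : Convex K (signHalfLine K σ) := by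
  cases σ
  · exact convex_Iic 0
  · exact convex_Ici 0

theorem AffineMap.exists_mem_segment_eq_zero (f : E →ᵃ[K] K) {x y : E}
    (hx : 0 ≤ f x) (hy : f y ≤ 0) : ∃ z ∈ segment K x y, f z = 0 := by
  have h0 : (0 : K) ∈ segment K (f y) (f x) := by
    rw [segment_eq_Icc (hy.trans hx)]
    exact ⟨hy, hx⟩
  rw [← image_segment, segment_symm] at h0
  exact h0

theorem AffineMap.mem_of_mem_segment {F : Type*} [AddCommGroup F] [Module K F]
    (f : E →ᵃ[K] F) {s : Set F} (hs : Convex K s) {x y z : E}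
    (hx : f x ∈ s) (hy : f y ∈ s) (hz : z ∈ segment K x y) : f z ∈ s :=
  hs.segment_subset hx hy (image_segment K f x y ▸ mem_image_of_mem f hz)

theorem exists_signPattern_points_on_last_hyperplane {p : ℕ} (f : Fin (p + 1) → E →ᵃ[K] K)
    (X : (Fin (p + 1) → Bool) → E) (hX : ∀ δ s, f s (X δ) ∈ signHalfLine K (δ s)) :
    ∃ Y : (Fin p → Bool) → E, (∀ δ, Y δ ∈ convexHull K (range X)) ∧
      (∀ δ, f (Fin.last p) (Y δ) = 0) ∧
      ∀ δ s, f s.castSucc (Y δ) ∈ signHalfLine K (δ s) := by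
  have hcut (δ : Fin p → Bool) :
      ∃ z ∈ segment K (X (Fin.snoc δ true)) (X (Fin.snoc δ false)), f (Fin.last p) z = 0 := by
    have hpos := hX (Fin.snoc δ true) (Fin.last p)
    have hneg := hX (Fin.snoc δ false) (Fin.last p)
    simp only [Fin.snoc_last, signHalfLine, if_true, Bool.false_eq_true, if_false] at hpos hneg
    exact (f _).exists_mem_segment_eq_zero hpos hneg
  choose Y hYseg hYzero using hcut
  refine ⟨Y, fun δ => ?_, hYzero, fun δ s => ?_⟩
  · exact (convex_convexHull K _).segment_subset (subset_convexHull K _ (mem_range_self _))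
      (subset_convexHull K _ (mem_range_self _)) (hYseg δ)
  · refine (f _).mem_of_mem_segment (convex_signHalfLine _) ?_ ?_ (hYseg δ)
    · simpa only [Fin.snoc_castSucc] using hX (Fin.snoc δ true) s.castSucc
    · simpa only [Fin.snoc_castSucc] using hX (Fin.snoc δ false) s.castSucc

theorem exists_mem_convexHull_of_signPatterns {p : ℕ} (f : Fin p → E →ᵃ[K] K)
    (X : (Fin p → Bool) → E) (hX : ∀ δ s, f s (X δ) ∈ signHalfLine K (δ s)) :
    ∃ y ∈ convexHull K (range X), ∀ s, f s y = 0 := by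
  induction p with
  | zero => exact ⟨X default, subset_convexHull K _ (mem_range_self _), finZeroElim⟩
  | succ p ih =>
    obtain ⟨Y, hYhull, hYlast, hYsign⟩ := exists_signPattern_points_on_last_hyperplane f X hX
    obtain ⟨y, hy, hyzero⟩ := ih (fun s => f s.castSucc) Y hYsign
    have hlast : convexHull K (range Y) ⊆ f (Fin.last p) ⁻¹' {0} :=
      convexHull_min (range_subset_iff.2 hYlast) ((convex_singleton 0).affine_preimage _)
    refine ⟨y, convexHull_min (range_subset_iff.2 hYhull) (convex_convexHull K _) hy, ?_⟩
    exact Fin.lastCases (hlast hy) hyzero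

end SignPatterns

/-- Let `a⁽¹⁾, …, a⁽ᵖ⁾ ∈ Kⁿ` and `b ∈ Kᵖ` over an ordered field `K`.
Suppose that for every sign pattern `δ ∈ {+1,-1}ᵖ` (encoded by `δ : Fin p → Bool`,
`true ↔ +1`) there is a point `X δ ∈ Kⁿ` with `δ_s (⟨a⁽ˢ⁾, X δ⟩ - b_s) ≥ 0` for all `s`.
Then some point `y` of the convex hull of the points `X δ` satisfies
`⟨a⁽ˢ⁾, y⟩ = b_s` for all `s`. -/
theorem zero_in_convex_hull_of_sign_patterns {K : Type*} [Field K] [LinearOrder K] [IsStrictOrderedRing K]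
    {n p : ℕ} (a : Fin p → Fin n → K) (b : Fin p → K)
    (X : (Fin p → Bool) → (Fin n → K))
    (hX : ∀ δ : Fin p → Bool, ∀ s : Fin p,
      if δ s then 0 ≤ (∑ k, a s k * X δ k) - b s else (∑ k, a s k * X δ k) - b s ≤ 0) :
    ∃ y ∈ convexHull K (Set.range X), ∀ s, ∑ k, a s k * y k = b s := by
  let f (s : Fin p) : (Fin n → K) →ᵃ[K] K :=
    (dotProductBilin K K (a s)).toAffineMap - AffineMap.const K _ (b s)
  have hf (s : Fin p) (z : Fin n → K) : f s z = ∑ k, a s k * z k - b s := rfl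
  obtain ⟨y, hy, hyzero⟩ := exists_mem_convexHull_of_signPatterns f X fun δ s => by
    have hδs := hX δ s
    revert hδs
    cases δ s <;> simp [signHalfLine, hf]
  exact ⟨y, hy, fun s => sub_eq_zero.1 ((hf s y).symm.trans (hyzero s))⟩
end

section
/- Let K be a real closed field with a valuation val: K → Γ ∪ {−∞}. Then there exists a cross-section, i.e. a group homomorphism csec: Γ → K* (into the multiplicative group) such that val ∘ csec is the identity on Γ. -/
/-- A real closed field: an ordered field in which every nonnegative element is a
square and every polynomial of odd degree has a root. -/
class IsRealClosedOrderedField (K : Type*) [Field K] [LinearOrder K] [IsStrictOrderedRing K] : Prop where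
  exists_sq : ∀ x : K, 0 ≤ x → ∃ y : K, y ^ 2 = x
  exists_root_of_odd : ∀ p : Polynomial K, Odd p.natDegree → ∃ x : K, p.eval x = 0

/-!
The valuation restricted to the multiplicative group `K_{>0}` is a surjective homomorphism onto `Γ`:
`|x|` has the valuation of `x`, because `2 • v |x| = 2 • v x` and `Γ` is torsion-free. Its kernel is
divisible, since in a real closed field every positive element has positive `n`-th roots and again
`Γ` is torsion-free. A divisible abelian group is an injective `ℤ`-module, so the kernel is a direct
summand and the restricted valuation has a homomorphic section.
-/

instance IsRealClosedOrderedField.toIsRealClosed {K : Type*} [Field K] [LinearOrder K]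
    [IsStrictOrderedRing K] [IsRealClosedOrderedField K] : IsRealClosed K :=
  .of_linearOrderedField
    (fun hx ↦ (IsRealClosedOrderedField.exists_sq _ hx).imp fun y hy ↦ by rw [← hy, sq])
    (IsRealClosedOrderedField.exists_root_of_odd _)

section RealClosed

variable {K : Type*} [Field K] [LinearOrder K] [IsStrictOrderedRing K] [IsRealClosed K]

theorem IsRealClosed.exists_pos_pow_eq {x : K} (hx : 0 < x) {n : ℕ} (hn : n ≠ 0) :
    ∃ y, 0 < y ∧ y ^ n = x := by
  obtain ⟨r, rfl⟩ := exists_eq_pow_of_nonneg hx.le hn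
  exact ⟨|r|, abs_pos.2 (by rintro rfl; simp [zero_pow hn] at hx), by rw [pow_abs, abs_of_pos hx]⟩

noncomputable instance Positive.divisibleByNat : DivisibleBy (Additive {x : K // 0 < x}) ℕ :=
  divisibleByOfSMulRightSurj _ _ fun hn a ↦
    let ⟨y, hy, hyn⟩ := IsRealClosed.exists_pos_pow_eq a.toMul.2 hn
    ⟨.ofMul ⟨y, hy⟩, Additive.toMul.injective <| Subtype.ext hyn⟩

end RealClosed

namespace AddMonoidHom

variable {A B : Type*} [AddCommGroup A] [AddCommGroup B]

noncomputable instance divisibleByKer [DivisibleBy A ℕ] [IsAddTorsionFree B] (f : A →+ B) :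
    DivisibleBy f.ker ℕ :=
  divisibleByOfSMulRightSurj _ _ fun {n} hn a ↦
    ⟨⟨DivisibleBy.div (a : A) n, by
        rw [mem_ker, ← nsmul_eq_zero_iff_right hn, ← map_nsmul, DivisibleBy.div_cancel _ hn]
        exact a.2⟩,
      Subtype.ext (DivisibleBy.div_cancel _ hn)⟩

/-- The projection `id - r` along a retraction `r` onto the (injective) kernel descends to
`A ⧸ f.ker ≃ B`. -/
theorem exists_rightInverse_of_divisibleBy_ker (f : A →+ B) (hf : Function.Surjective f)
    [DivisibleBy f.ker ℤ] : ∃ s : B →+ A, f.comp s = .id B := by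
  obtain ⟨r, hr⟩ := (Module.Baer.of_divisible f.ker).extension_property_addMonoidHom
    f.ker.subtype Subtype.val_injective (.id _)
  let p : A →+ A := .id A - f.ker.subtype.comp r
  have hp : f.ker ≤ p.ker := fun a ha ↦ by
    simp [p, show r a = ⟨a, ha⟩ from DFunLike.congr_fun hr ⟨a, ha⟩]
  refine ⟨(QuotientAddGroup.lift f.ker p hp).comp
    (QuotientAddGroup.quotientKerEquivOfSurjective f hf).symm.toAddMonoidHom, ?_⟩
  ext b
  obtain ⟨a, rfl⟩ := hf b
  have ha : (QuotientAddGroup.quotientKerEquivOfSurjective f hf).symm (f a) = a :=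
    (AddEquiv.symm_apply_eq _).2 rfl
  simp [ha, p, mem_ker.1 (r a).2]

end AddMonoidHom

section PositiveValuation

variable {K Γ : Type*} [Field K] [LinearOrder K] [IsStrictOrderedRing K] [AddCommGroup Γ]
  (v : K → WithBot Γ)

/-- Restricted to positive elements rather than to `Kˣ`, so that the kernel can be divisible
(`-1` has no square root). -/
noncomputable def posValuation (hzero : ∀ x : K, v x = ⊥ ↔ x = 0)
    (hmul : ∀ x y : K, v (x * y) = v x + v y) : Additive {x : K // 0 < x} →+ Γ where
  toFun x := (v x.toMul).unbot ((hzero _).not.2 x.toMul.2.ne')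
  map_zero' := WithBot.coe_injective <| by
    obtain ⟨a, ha⟩ := WithBot.ne_bot_iff_exists.1 ((hzero 1).not.2 one_ne_zero)
    have h := hmul 1 1
    rw [mul_one, ← ha, ← WithBot.coe_add, WithBot.coe_inj, left_eq_add] at h
    rw [WithBot.coe_unbot, toMul_zero, Positive.val_one, ← ha, h]
  map_add' x y := WithBot.coe_injective <| by simp [hmul]

theorem coe_posValuation (hzero : ∀ x : K, v x = ⊥ ↔ x = 0)
    (hmul : ∀ x y : K, v (x * y) = v x + v y) (x : Additive {x : K // 0 < x}) :
    (posValuation v hzero hmul x : WithBot Γ) = v x.toMul :=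
  WithBot.coe_unbot _ _

theorem posValuation_surjective [LinearOrder Γ] [IsOrderedAddMonoid Γ]
    (hsurj : Function.Surjective v) (hzero : ∀ x : K, v x = ⊥ ↔ x = 0)
    (hmul : ∀ x y : K, v (x * y) = v x + v y) :
    Function.Surjective (posValuation v hzero hmul) := by
  intro γ
  obtain ⟨x, hx⟩ := hsurj γ
  have hx0 : x ≠ 0 := fun h ↦ by simp [(hzero x).2 h] at hx
  refine ⟨.ofMul ⟨|x|, abs_pos.2 hx0⟩, ?_⟩
  have h : ((2 • posValuation v hzero hmul (.ofMul ⟨|x|, abs_pos.2 hx0⟩) : Γ) : WithBot Γ)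
      = ((2 • γ : Γ) : WithBot Γ) := by
    rw [two_nsmul, two_nsmul, WithBot.coe_add, WithBot.coe_add, coe_posValuation, toMul_ofMul,
      ← hmul, ← hx, ← hmul]
    exact congrArg v (abs_mul_abs_self x)
  exact (nsmul_right_inj two_ne_zero).1 (WithBot.coe_injective h)

end PositiveValuation

theorem exists_cross_section_of_realClosed_general
    {K : Type*} [Field K] [LinearOrder K] [IsStrictOrderedRing K] [IsRealClosedOrderedField K]
    {Γ : Type*} [AddCommGroup Γ] [LinearOrder Γ] [IsOrderedAddMonoid Γ]
    (v : K → WithBot Γ) (hsurj : Function.Surjective v)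
    (hzero : ∀ x : K, v x = ⊥ ↔ x = 0)
    (hmul : ∀ x y : K, v (x * y) = v x + v y) :
    ∃ csec : Γ → K, (∀ γ : Γ, csec γ ≠ 0) ∧
      (∀ γ δ : Γ, csec (γ + δ) = csec γ * csec δ) ∧
      (∀ γ : Γ, v (csec γ) = (γ : WithBot Γ)) := by
  let := AddGroup.divisibleByIntOfDivisibleByNat (posValuation v hzero hmul).ker
  obtain ⟨s, hs⟩ := (posValuation v hzero hmul).exists_rightInverse_of_divisibleBy_ker
    (posValuation_surjective v hsurj hzero hmul)
  refine ⟨fun γ ↦ (s γ).toMul, fun γ ↦ (s γ).toMul.2.ne', fun γ δ ↦ by simp, fun γ ↦ ?_⟩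
  rw [← coe_posValuation v hzero hmul, ← AddMonoidHom.comp_apply, hs, AddMonoidHom.id_apply]

/-- Let `K` be a real closed field with a (surjective) valuation
`v : K → Γ ∪ {-∞}`.  Then there exists a cross-section, i.e. a group homomorphism
`csec : Γ → K*` (from the additive group `Γ` to the multiplicative group of `K`)
such that `v ∘ csec` is the identity on `Γ`. -/
theorem exists_cross_section_of_realClosed
    {K : Type*} [Field K] [LinearOrder K] [IsStrictOrderedRing K] [IsRealClosedOrderedField K]
    {Γ : Type*} [AddCommGroup Γ] [LinearOrder Γ] [IsOrderedAddMonoid Γ]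
    (v : K → WithBot Γ) (hsurj : Function.Surjective v)
    (hzero : ∀ x : K, v x = ⊥ ↔ x = 0)
    (hmul : ∀ x y : K, v (x * y) = v x + v y)
    (hadd : ∀ x y : K, v (x + y) ≤ max (v x) (v y)) :
    ∃ csec : Γ → K, (∀ γ : Γ, csec γ ≠ 0) ∧
      (∀ γ δ : Γ, csec (γ + δ) = csec γ * csec δ) ∧
      (∀ γ : Γ, v (csec γ) = (γ : WithBot Γ)) :=
  exists_cross_section_of_realClosed_general v hsurj hzero hmul
end

section
/- Let P be a polynomial over the Puiseux series field K and p⁺, p⁻ the tropical polynomials formed from the valuations of the positive and negative parts of P. If x ∈ K^n_{≥0} satisfies P(x) ≥ 0, then p⁺(val(x)) ≥ p⁻(val(x)). -/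
noncomputable section
open scoped Classical

/-- The field of (formal generalized real) Puiseux series, realized as Hahn series
over `ℝ` with exponents in `ℝᵒᵈ`: the support of a series is well-ordered for the
*reversed* order of `ℝ`, so that each nonzero series has a term of greatest real
exponent (its leading term), the exponents being a strictly decreasing (finite or
unbounded) family of reals. -/
abbrev PS : Type := HahnSeries ℝᵒᵈ ℝ

namespace PS

/-- The leading coefficient of a Puiseux series (`0` for the zero series). -/
def lc (x : PS) : ℝ := x.coeff x.order

/-- The valuation of a Puiseux series: its greatest exponent, with `val 0 = ⊥ = -∞`. -/
def val (x : PS) : WithBot ℝ :=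
  if x = 0 then ⊥ else (OrderDual.ofDual x.order : ℝ)

/-- The real-valued valuation (greatest exponent), with junk value `0` at `0`. -/
def valR (x : PS) : ℝ := OrderDual.ofDual x.order

/-- A Puiseux series is nonnegative when its leading coefficient is nonnegative. -/
def Nonneg (x : PS) : Prop := 0 ≤ lc x

/-- A Puiseux series is positive when its leading coefficient is positive. -/
def Pos (x : PS) : Prop := 0 < lc x

/-- The order of the field of Puiseux series: `x ≤ y` iff `y - x` is nonnegative. -/
def le (x y : PS) : Prop := Nonneg (y - x)

/-- The strict order of the field of Puiseux series. -/
def lt (x y : PS) : Prop := Pos (y - x)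

/-- The positive monomial `t^r`. -/
def tpow (r : ℝ) : PS := HahnSeries.single (OrderDual.toDual r) 1

end PS

section Poly

/- A polynomial `P = ∑ i, c i * X^(α i)` over the Puiseux series in `n` variables is
represented by a finite family of coefficients `c : Fin N → PS` and multi-indices
`α : Fin N → Fin n → ℕ`. -/
variable {n N : ℕ} (c : Fin N → PS) (α : Fin N → Fin n → ℕ)

/-- `P⁺`: the sum of the monomials of `P` with (strictly) positive coefficient,
evaluated at `x`. -/
def Pplus (x : Fin n → PS) : PS :=
  ∑ i ∈ Finset.univ.filter (fun i => PS.Pos (c i)), c i * ∏ k, x k ^ α i k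

/-- `P⁻`: minus the sum of the monomials of `P` with negative coefficient,
evaluated at `x`; thus `P = P⁺ - P⁻`. -/
def Pminus (x : Fin n → PS) : PS :=
  ∑ i ∈ Finset.univ.filter (fun i => PS.Pos (-(c i))), (-(c i)) * ∏ k, x k ^ α i k

/-- The tropical polynomial `p⁺` associated with `P⁺` (coefficients replaced by their
valuations), evaluated tropically (max-plus) at a point of `(ℝ ∪ {-∞})ⁿ`. -/
def tropPlus (y : Fin n → WithBot ℝ) : WithBot ℝ :=
  (Finset.univ.filter (fun i => PS.Pos (c i))).sup
    (fun i => (PS.valR (c i) : WithBot ℝ) + ∑ k, α i k • y k)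

/-- The tropical polynomial `p⁻` associated with `P⁻`, evaluated tropically. -/
def tropMinus (y : Fin n → WithBot ℝ) : WithBot ℝ :=
  (Finset.univ.filter (fun i => PS.Pos (-(c i)))).sup
    (fun i => (PS.valR (-(c i)) : WithBot ℝ) + ∑ k, α i k • y k)

end Poly

/-! On nonnegative Puiseux series the leading terms of a sum cannot cancel, so `val` turns
sums into maxima and products into sums: evaluating a polynomial with positive coefficients at
a nonnegative point commutes with `val`, giving `val P⁺(x) = p⁺(val x)` and
`val P⁻(x) = p⁻(val x)`. Since `P⁺(x) = P⁻(x) + P(x)` with both summands nonnegative,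
`val P⁺(x) = max (val P⁻(x)) (val P(x)) ≥ val P⁻(x)`. -/

namespace PS

lemma lc_eq_leadingCoeff (x : PS) : lc x = x.leadingCoeff := HahnSeries.leadingCoeff_eq.symm

lemma lc_mul (x y : PS) : lc (x * y) = lc x * lc y := by
  simp only [lc_eq_leadingCoeff, HahnSeries.leadingCoeff_mul]

lemma Pos.ne_zero {x : PS} (hx : Pos x) : x ≠ 0 := by
  rintro rfl
  simp [Pos, lc] at hx

lemma Nonneg.pos_of_ne_zero {x : PS} (hx : Nonneg x) (h : x ≠ 0) : Pos x :=
  hx.lt_of_ne' (HahnSeries.coeff_order_eq_zero.not.mpr h)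

lemma Pos.add {x y : PS} (hx : Pos x) (hy : Pos y) :
    Pos (x + y) ∧ (x + y).order = min x.order y.order := by
  have hcoeff : 0 < (x + y).coeff (min x.order y.order) := by
    rcases lt_trichotomy x.order y.order with h | h | h
    · rw [min_eq_left h.le, HahnSeries.coeff_add, HahnSeries.coeff_eq_zero_of_lt_order h,
        add_zero]
      exact hx
    · rw [min_eq_left h.le, HahnSeries.coeff_add]
      exact add_pos hx (h ▸ hy)
    · rw [min_eq_right h.le, HahnSeries.coeff_add, HahnSeries.coeff_eq_zero_of_lt_order h,
        zero_add]
      exact hy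
  have hsum : x + y ≠ 0 := HahnSeries.ne_zero_of_coeff_ne_zero hcoeff.ne'
  have horder : (x + y).order = min x.order y.order :=
    (HahnSeries.order_le_of_coeff_ne_zero hcoeff.ne').antisymm
      (HahnSeries.min_order_le_order_add hsum)
  exact ⟨by rwa [Pos, lc, horder], horder⟩

lemma Nonneg.add {x y : PS} (hx : Nonneg x) (hy : Nonneg y) : Nonneg (x + y) := by
  rcases eq_or_ne x 0 with rfl | hx0
  · simpa using hy
  rcases eq_or_ne y 0 with rfl | hy0
  · simpa using hx
  exact ((hx.pos_of_ne_zero hx0).add (hy.pos_of_ne_zero hy0)).1.le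

def nonnegSubsemiring : Subsemiring PS where
  carrier := {x | Nonneg x}
  mul_mem' {x y} (hx : Nonneg x) (hy : Nonneg y) : Nonneg (x * y) :=
    show 0 ≤ lc (x * y) from lc_mul x y ▸ mul_nonneg hx hy
  one_mem' := by simp [Nonneg, lc_eq_leadingCoeff]
  add_mem' := Nonneg.add
  zero_mem' := by simp [Nonneg, lc]

lemma val_of_ne_zero {x : PS} (h : x ≠ 0) : val x = valR x := if_neg h

lemma val_mul (x y : PS) : val (x * y) = val x + val y := by
  rcases eq_or_ne x 0 with rfl | hx
  · simp [val]
  rcases eq_or_ne y 0 with rfl | hy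
  · simp [val]
  rw [val_of_ne_zero (mul_ne_zero hx hy), val_of_ne_zero hx, val_of_ne_zero hy,
    ← WithBot.coe_add, valR, HahnSeries.order_mul hx hy]
  rfl

lemma val_pow (x : PS) (m : ℕ) : val (x ^ m) = m • val x := by
  induction m with
  | zero => simp [val_of_ne_zero, valR]
  | succ m ih => rw [pow_succ, val_mul, ih, succ_nsmul]

lemma val_prod {ι : Type*} (s : Finset ι) (f : ι → PS) :
    val (∏ i ∈ s, f i) = ∑ i ∈ s, val (f i) := by
  induction s using Finset.cons_induction with
  | empty => simp [val_of_ne_zero, valR]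
  | cons a s ha ih => rw [Finset.prod_cons, Finset.sum_cons, val_mul, ih]

lemma val_add_of_nonneg {x y : PS} (hx : Nonneg x) (hy : Nonneg y) :
    val (x + y) = max (val x) (val y) := by
  rcases eq_or_ne x 0 with rfl | hx0
  · simp [val]
  rcases eq_or_ne y 0 with rfl | hy0
  · simp [val]
  obtain ⟨hpos, horder⟩ := (hx.pos_of_ne_zero hx0).add (hy.pos_of_ne_zero hy0)
  rw [val_of_ne_zero hpos.ne_zero, val_of_ne_zero hx0, val_of_ne_zero hy0, valR, valR, valR,
    horder, ofDual_min, WithBot.coe_max]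

lemma val_sum_of_nonneg {ι : Type*} (s : Finset ι) (f : ι → PS) (h : ∀ i ∈ s, Nonneg (f i)) :
    val (∑ i ∈ s, f i) = s.sup fun i => val (f i) := by
  induction s using Finset.cons_induction with
  | empty => simp [val]
  | cons a s ha ih =>
    rw [Finset.forall_mem_cons] at h
    rw [Finset.sum_cons, Finset.sup_cons, val_add_of_nonneg h.1 (nonnegSubsemiring.sum_mem h.2),
      ih h.2]

lemma val_le_val_of_le {x y : PS} (hx : Nonneg x) (hxy : le x y) : val x ≤ val y := by
  calc val x ≤ max (val x) (val (y - x)) := le_max_left _ _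
    _ = val y := by rw [← val_add_of_nonneg hx hxy, add_sub_cancel]

lemma val_monomial {n : ℕ} {d : PS} (hd : d ≠ 0) (β : Fin n → ℕ) (x : Fin n → PS) :
    val (d * ∏ k, x k ^ β k) = valR d + ∑ k, β k • val (x k) := by
  simp only [val_mul, val_of_ne_zero hd, val_prod, val_pow]

lemma monomial_nonneg {n : ℕ} {d : PS} (hd : Nonneg d) (β : Fin n → ℕ) {x : Fin n → PS}
    (hx : ∀ k, Nonneg (x k)) : Nonneg (d * ∏ k, x k ^ β k) :=
  nonnegSubsemiring.mul_mem hd <| nonnegSubsemiring.prod_mem fun k _ =>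
    nonnegSubsemiring.pow_mem (hx k) _

lemma val_sum_monomials {n N : ℕ} (s : Finset (Fin N)) {d : Fin N → PS}
    (hd : ∀ i ∈ s, Pos (d i)) (α : Fin N → Fin n → ℕ) {x : Fin n → PS}
    (hx : ∀ k, Nonneg (x k)) :
    val (∑ i ∈ s, d i * ∏ k, x k ^ α i k) =
      s.sup fun i => (valR (d i) : WithBot ℝ) + ∑ k, α i k • val (x k) := by
  rw [val_sum_of_nonneg s _ fun i hi => monomial_nonneg (hd i hi).le (α i) hx]
  exact Finset.sup_congr rfl fun i hi => val_monomial (hd i hi).ne_zero (α i) x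

variable {n N : ℕ} (c : Fin N → PS) (α : Fin N → Fin n → ℕ) {x : Fin n → PS}

lemma val_Pplus (hx : ∀ k, Nonneg (x k)) : val (Pplus c α x) = tropPlus c α fun k => val (x k) :=
  val_sum_monomials _ (fun _ hi => (Finset.mem_filter.1 hi).2) α hx

lemma val_Pminus (hx : ∀ k, Nonneg (x k)) :
    val (Pminus c α x) = tropMinus c α fun k => val (x k) :=
  val_sum_monomials _ (fun _ hi => (Finset.mem_filter.1 hi).2) α hx

lemma Pminus_nonneg (hx : ∀ k, Nonneg (x k)) : Nonneg (Pminus c α x) :=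
  nonnegSubsemiring.sum_mem fun i hi => monomial_nonneg (Finset.mem_filter.1 hi).2.le (α i) hx

end PS

/-- Let `P = P⁺ - P⁻` be a polynomial over the Puiseux series and
`p⁺, p⁻` the tropical polynomials formed from the valuations of its positive and
negative parts.  If `x` is in the nonnegative orthant and `P(x) ≥ 0`, then
`p⁺(val x) ≥ p⁻(val x)`. -/
theorem PS.trop_ge_of_nonneg_eval {n N : ℕ} (c : Fin N → PS) (α : Fin N → Fin n → ℕ)
    (x : Fin n → PS) (hx : ∀ k, PS.Nonneg (x k))
    (hP : PS.le 0 (Pplus c α x - Pminus c α x)) :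
    tropMinus c α (fun k => PS.val (x k)) ≤ tropPlus c α (fun k => PS.val (x k)) := by
  rw [← PS.val_Pplus c α hx, ← PS.val_Pminus c α hx]
  refine PS.val_le_val_of_le (PS.Pminus_nonneg c α hx) ?_
  simpa only [PS.le, sub_zero] using hP
end
end

section
/- The image under the coordinatewise valuation of an open interval (a, b) in the positive Puiseux series K_{>0} is an interval in ℝ that is closed (i.e. of the form [val(a), val(b)], [val(a), +∞)∩ℝ or similar closed interval, or ℝ itself). -/
noncomputable section
open scoped Classical

/-
For positive `a < x < b` the valuation is monotone: if `val x < val a`, the leading term of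
`x - a` would be that of `-a`, which is negative. Conversely every `l` strictly between
`val a` and `val b` is the valuation of `t^l ∈ (a, b)`, and the endpoints are attained by
`a + t^r` and `b - t^r` for `r` far below `val a`, `val b` and `val (b - a)`: such a
perturbation changes neither the leading term of `a` (resp. `b`) nor that of `b - a`.
So the image is the closed interval `[val a, val b]`.
-/

namespace PS

def Ioo (a b : PS) : Set PS := {x | lt a x ∧ lt x b}

lemma pos_iff_zero_lt_toLex (x : PS) : Pos x ↔ 0 < toLex x := by
  rw [Pos, lc_eq_leadingCoeff]
  exact HahnSeries.leadingCoeff_pos_iff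

lemma lt_iff_toLex_lt (x y : PS) : lt x y ↔ toLex x < toLex y := by
  rw [lt, pos_iff_zero_lt_toLex]
  exact sub_pos

lemma Pos.of_lt {a x : PS} (ha : Pos a) (h : lt a x) : Pos x := by
  rw [pos_iff_zero_lt_toLex] at ha ⊢
  exact ha.trans ((lt_iff_toLex_lt a x).1 h)

lemma valR_neg (x : PS) : valR (-x) = valR x := by
  simp only [valR, HahnSeries.order_neg]

lemma lc_neg (x : PS) : lc (-x) = -lc x := by
  rw [lc, lc, HahnSeries.order_neg, HahnSeries.coeff_neg]

lemma valR_tpow (r : ℝ) : valR (tpow r) = r := by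
  simp only [valR, tpow, HahnSeries.order_single one_ne_zero]
  rfl

lemma pos_tpow (r : ℝ) : Pos (tpow r) := by
  rw [Pos, lc_eq_leadingCoeff, tpow, HahnSeries.leadingCoeff_of_single]
  exact one_pos

lemma orderTop_lt_orderTop_of_valR_lt {x y : PS} (hx : x ≠ 0) (h : valR y < valR x) :
    x.orderTop < y.orderTop := by
  rcases eq_or_ne y 0 with rfl | hy
  · simp [HahnSeries.orderTop_of_ne_zero hx]
  rw [← HahnSeries.order_eq_orderTop_of_ne_zero hx, ← HahnSeries.order_eq_orderTop_of_ne_zero hy,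
    WithTop.coe_lt_coe]
  exact h

lemma valR_add_of_valR_lt {x y : PS} (hx : x ≠ 0) (h : valR y < valR x) :
    valR (x + y) = valR x := by
  have hxy := HahnSeries.orderTop_add_eq_left (orderTop_lt_orderTop_of_valR_lt hx h)
  have hne : x + y ≠ 0 := by
    rw [← HahnSeries.orderTop_ne_top, hxy]
    exact HahnSeries.orderTop_ne_top.2 hx
  rw [← HahnSeries.order_eq_orderTop_of_ne_zero hne, ← HahnSeries.order_eq_orderTop_of_ne_zero hx,
    WithTop.coe_eq_coe] at hxy
  simp only [valR, hxy]

lemma lc_add_of_valR_lt {x y : PS} (hx : x ≠ 0) (h : valR y < valR x) :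
    lc (x + y) = lc x := by
  rw [lc_eq_leadingCoeff, lc_eq_leadingCoeff]
  exact HahnSeries.leadingCoeff_add_eq_left (orderTop_lt_orderTop_of_valR_lt hx h)

lemma Pos.add_of_valR_lt {x y : PS} (hx : Pos x) (h : valR y < valR x) : Pos (x + y) := by
  rw [Pos, lc_add_of_valR_lt hx.ne_zero h]
  exact hx

lemma Pos.sub_of_valR_lt {x y : PS} (hx : Pos x) (h : valR y < valR x) : Pos (x - y) := by
  rw [sub_eq_add_neg]
  exact hx.add_of_valR_lt (by rwa [valR_neg])

lemma valR_le_of_lt {a x : PS} (ha : Pos a) (h : lt a x) : valR a ≤ valR x := by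
  by_contra! hxa
  have hlc : lc (x - a) = -lc a := by
    rw [sub_eq_neg_add, lc_add_of_valR_lt (neg_ne_zero.2 ha.ne_zero) (by rwa [valR_neg]), lc_neg]
  have hpos : 0 < lc (x - a) := h
  have ha' : 0 < lc a := ha
  linarith

lemma valR_image_Ioo_subset {a b : PS} (ha : Pos a) :
    valR '' Ioo a b ⊆ Set.Icc (valR a) (valR b) := by
  rintro _ ⟨x, ⟨hax, hxb⟩, rfl⟩
  exact ⟨valR_le_of_lt ha hax, valR_le_of_lt (ha.of_lt hax) hxb⟩

lemma valR_left_mem_valR_image_Ioo {a b : PS} (ha : Pos a) (hab : lt a b) :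
    valR a ∈ valR '' Ioo a b := by
  obtain ⟨r, hr⟩ := exists_lt (min (valR a) (valR (b - a)))
  rw [lt_min_iff] at hr
  refine ⟨a + tpow r, ⟨?_, ?_⟩, valR_add_of_valR_lt ha.ne_zero ((valR_tpow r).trans_lt hr.1)⟩
  · rw [lt, add_sub_cancel_left]
    exact pos_tpow r
  · rw [lt, sub_add_eq_sub_sub]
    exact Pos.sub_of_valR_lt hab ((valR_tpow r).trans_lt hr.2)

lemma valR_right_mem_valR_image_Ioo {a b : PS} (ha : Pos a) (hab : lt a b) :
    valR b ∈ valR '' Ioo a b := by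
  have hb : Pos b := ha.of_lt hab
  obtain ⟨r, hr⟩ := exists_lt (min (valR b) (valR (b - a)))
  rw [lt_min_iff] at hr
  refine ⟨b - tpow r, ⟨?_, ?_⟩, ?_⟩
  · rw [lt, sub_right_comm]
    exact Pos.sub_of_valR_lt hab ((valR_tpow r).trans_lt hr.2)
  · rw [lt, sub_sub_cancel]
    exact pos_tpow r
  · rw [sub_eq_add_neg]
    exact valR_add_of_valR_lt hb.ne_zero (by rw [valR_neg, valR_tpow]; exact hr.1)

lemma mem_valR_image_Ioo {a b : PS} (hb : Pos b) {l : ℝ} (hl : l ∈ Set.Ioo (valR a) (valR b)) :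
    l ∈ valR '' Ioo a b := by
  refine ⟨tpow l, ⟨?_, ?_⟩, valR_tpow l⟩
  · exact (pos_tpow l).sub_of_valR_lt (hl.1.trans_eq (valR_tpow l).symm)
  · exact hb.sub_of_valR_lt ((valR_tpow l).trans_lt hl.2)

lemma valR_image_Ioo {a b : PS} (ha : Pos a) (hab : lt a b) :
    valR '' Ioo a b = Set.Icc (valR a) (valR b) := by
  refine (valR_image_Ioo_subset ha).antisymm fun l ⟨hal, hlb⟩ => ?_
  rcases hal.eq_or_lt with rfl | hal
  · exact valR_left_mem_valR_image_Ioo ha hab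
  rcases hlb.eq_or_lt with rfl | hlb
  · exact valR_right_mem_valR_image_Ioo ha hab
  exact mem_valR_image_Ioo (ha.of_lt hab) ⟨hal, hlb⟩

end PS

/-- The image under the valuation of an open interval `(a, b)` of
positive Puiseux series is an interval of `ℝ` (an order-connected set) that is
closed in `ℝ`. -/
theorem PS.val_image_Ioo (a b : PS) (ha : PS.lt 0 a) (hab : PS.lt a b) :
    (PS.valR '' {x : PS | PS.lt a x ∧ PS.lt x b}).OrdConnected ∧
      IsClosed (PS.valR '' {x : PS | PS.lt a x ∧ PS.lt x b}) := by
  have ha' : PS.Pos a := by rwa [PS.lt, sub_zero] at ha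
  have himage : PS.valR '' {x : PS | PS.lt a x ∧ PS.lt x b} = Set.Icc (PS.valR a) (PS.valR b) :=
    PS.valR_image_Ioo ha' hab
  rw [himage]
  exact ⟨Set.ordConnected_Icc, isClosed_Icc⟩
end
end
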